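/- Fractional integration by parts (Lemma 4 of the paper, stated with explicit integrals): Let 0 < α < 1 and a < b be real numbers, let f : [a,b] → ℝ be continuously differentiable and g : [a,b] → ℝ be continuous. Define the Riemann–Liouville fractional integral G(t) = (1/Γ(1−α)) ∫ₐᵗ (t−s)^{−α} g(s) ds for t ∈ [a,b] (so G(a) = 0), and assume G is differentiable on (a,b) with derivative G' integrable over (a,b) (G' is the Riemann–Liouville derivative ₐD_t^α g). Then ∫ₐᵇ f(t)·G'(t) dt = f(b)·G(b) − ∫ₐᵇ g(t) · [ (1/Γ(1−α)) ∫ₜᵇ (τ−t)^{−α} f'(τ) dτ ] dt. In other words, the left Riemann–Liouville derivative acting on g is transferred onto f as (minus) the right-sided Caputo derivative ᵗᶜD_b^α f(t) = (−1/Γ(1−α)) ∫ₜᵇ (τ−t)^{−α} f'(τ) dτ, together with the boundary term [f(t)·ₐI_t^{1−α}g(t)] evaluated between a and b. -/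

import Mathlib

/-!
Integrating by parts moves the derivative from `G` onto `f`; the boundary term at `a` drops
out since `G a = 0`. What remains, `∫ₐᵇ f' G`, is the integral of `f'(t) (t - s)^{-α} g(s)` over
the triangle `a ≤ s ≤ t ≤ b`, and Fubini swaps the order of integration (Dirichlet's formula).
Both the integrability needed for Fubini and the continuity of `G` needed for the integration by
parts come from viewing `∫ₐᵗ k(t - s) g(s) ds` as a convolution with the truncated kernel
`𝟙_{(0, b - a]} k`, which is integrable for `k(u) = u^{-α}` as soon as `α < 1`.
-/

open Real intervalIntegral
open MeasureTheory Set
open scoped Convolution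

section VolterraKernel

variable {a b : ℝ} {k : ℝ → ℝ}

lemma integral_mul_indicator_kernel_sub_left {h g : ℝ → ℝ} (hh : ∀ s < a, h s = 0) {t : ℝ}
    (ht : t ∈ Icc a b) (hhg : EqOn h g (Ico a t)) :
    ∫ s, h s * (Ioc 0 (b - a)).indicator k (t - s) = ∫ s in a..t, k (t - s) * g s := by
  have hpt : (fun s => h s * (Ioc 0 (b - a)).indicator k (t - s)) =
      (Ico a t).indicator (fun s => k (t - s) * g s) := by
    ext s
    by_cases hs : s ∈ Ico a t
    · rw [indicator_of_mem hs, hhg hs, mul_comm,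
        indicator_of_mem (show t - s ∈ Ioc 0 (b - a) from
          ⟨by linarith [hs.2], by linarith [hs.1, ht.2]⟩)]
    · rw [indicator_of_notMem hs]
      rcases lt_or_ge s a with hsa | hsa
      · rw [hh s hsa, zero_mul]
      · rw [indicator_of_notMem fun hts => hs ⟨hsa, by linarith [hts.1]⟩, mul_zero]
  rw [hpt, MeasureTheory.integral_indicator measurableSet_Ico, integral_of_le ht.1,
    integral_Ico_eq_integral_Ioo, integral_Ioc_eq_integral_Ioo]

lemma integral_mul_indicator_kernel_sub_right {h φ : ℝ → ℝ} (hh : ∀ t, b < t → h t = 0)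
    {s : ℝ} (hs : s ∈ Icc a b) (hhφ : EqOn h φ (Ioc s b)) :
    ∫ t, h t * (Ioc 0 (b - a)).indicator k (t - s) = ∫ t in s..b, k (t - s) * φ t := by
  have hpt : (fun t => h t * (Ioc 0 (b - a)).indicator k (t - s)) =
      (Ioc s b).indicator (fun t => k (t - s) * φ t) := by
    ext t
    by_cases ht : t ∈ Ioc s b
    · rw [indicator_of_mem ht, hhφ ht, mul_comm,
        indicator_of_mem (show t - s ∈ Ioc 0 (b - a) from
          ⟨by linarith [ht.1], by linarith [ht.2, hs.1]⟩)]
    · rw [indicator_of_notMem ht]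
      rcases lt_or_ge b t with hbt | hbt
      · rw [hh t hbt, zero_mul]
      · rw [indicator_of_notMem fun hts => ht ⟨by linarith [hts.1], hbt⟩, mul_zero]
  rw [hpt, MeasureTheory.integral_indicator measurableSet_Ioc, integral_of_le hs.2]

lemma integral_indicator_Icc_mul (hab : a ≤ b) (f F : ℝ → ℝ) :
    ∫ x, (Icc a b).indicator f x * F x = ∫ x in a..b, f x * F x := by
  simp_rw [← indicator_mul_left]
  rw [MeasureTheory.integral_indicator measurableSet_Icc, integral_Icc_eq_integral_Ioc,
    integral_of_le hab]

theorem integral_mul_volterra_swap (hab : a ≤ b) (hk : IntervalIntegrable k volume 0 (b - a))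
    {φ g : ℝ → ℝ} {C : ℝ} (hφ : AEStronglyMeasurable φ (volume.restrict (Icc a b)))
    (hφC : ∀ t ∈ Icc a b, ‖φ t‖ ≤ C) (hg : IntegrableOn g (Icc a b)) :
    ∫ t in a..b, φ t * ∫ s in a..t, k (t - s) * g s =
      ∫ s in a..b, g s * ∫ t in s..b, k (t - s) * φ t := by
  set κ := (Ioc 0 (b - a)).indicator k
  set φ₀ := (Icc a b).indicator φ
  set g₀ := (Icc a b).indicator g
  have hint : Integrable (fun p : ℝ × ℝ => φ₀ p.1 * (g₀ p.2 * κ (p.1 - p.2)))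
      (volume.prod volume) := by
    refine Integrable.bdd_mul (c := max C 0) ?_ ?_ ?_
    · simpa using (hg.integrable_indicator measurableSet_Icc).convolution_integrand
        (ContinuousLinearMap.mul ℝ ℝ) (hk.1.integrable_indicator measurableSet_Ioc)
    · exact ((aestronglyMeasurable_indicator_iff measurableSet_Icc).2 hφ).comp_fst
    · refine Filter.Eventually.of_forall fun p => ?_
      by_cases hp : p.1 ∈ Icc a b
      · simp only [φ₀, indicator_of_mem hp]
        exact (hφC _ hp).trans (le_max_left _ _)
      · simp [φ₀, indicator_of_notMem hp]
  have hleft : ∀ t ∈ uIcc a b,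
      φ t * ∫ s in a..t, k (t - s) * g s = φ t * ∫ s, g₀ s * κ (t - s) := by
    intro t ht
    rw [uIcc_of_le hab] at ht
    rw [integral_mul_indicator_kernel_sub_left (fun s hs => indicator_of_notMem
      (fun hs' : s ∈ Icc a b => (not_le.2 hs) hs'.1) g) ht (fun s hs => indicator_of_mem
      (show s ∈ Icc a b from ⟨hs.1, hs.2.le.trans ht.2⟩) g)]
  have hright : ∀ s ∈ uIcc a b,
      g s * ∫ t, φ₀ t * κ (t - s) = g s * ∫ t in s..b, k (t - s) * φ t := by
    intro s hs
    rw [uIcc_of_le hab] at hs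
    rw [integral_mul_indicator_kernel_sub_right (fun t ht => indicator_of_notMem
      (fun ht' : t ∈ Icc a b => (not_le.2 ht) ht'.2) φ) hs (fun t ht => indicator_of_mem
      (show t ∈ Icc a b from ⟨hs.1.trans ht.1.le, ht.2⟩) φ)]
  calc ∫ t in a..b, φ t * ∫ s in a..t, k (t - s) * g s
      = ∫ t, φ₀ t * ∫ s, g₀ s * κ (t - s) := by
        rw [integral_congr hleft, integral_indicator_Icc_mul hab]
    _ = ∫ t, ∫ s, φ₀ t * (g₀ s * κ (t - s)) := by
        simp_rw [MeasureTheory.integral_const_mul]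
    _ = ∫ s, ∫ t, φ₀ t * (g₀ s * κ (t - s)) := integral_integral_swap hint
    _ = ∫ s, g₀ s * ∫ t, φ₀ t * κ (t - s) := by
        simp_rw [mul_left_comm _ (g₀ _), MeasureTheory.integral_const_mul]
    _ = ∫ s in a..b, g s * ∫ t in s..b, k (t - s) * φ t := by
        rw [integral_indicator_Icc_mul hab, integral_congr hright]

lemma intervalIntegrable_kernel_sub (hk : IntervalIntegrable k volume 0 (b - a)) {t : ℝ}
    (ht : t ∈ Icc a b) : IntervalIntegrable (fun s => k (t - s)) volume a t := by
  have hk' : IntervalIntegrable k volume 0 (t - a) := by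
    refine hk.mono_set (uIcc_subset_uIcc left_mem_uIcc ?_)
    rw [uIcc_of_le (by linarith [ht.1, ht.2])]
    exact ⟨sub_nonneg.2 ht.1, by linarith [ht.2]⟩
  simpa using (hk'.comp_sub_left t).symm

theorem continuousOn_integral_volterra (hab : a ≤ b)
    (hk : IntervalIntegrable k volume 0 (b - a)) {g : ℝ → ℝ} (hg : ContinuousOn g (Icc a b)) :
    ContinuousOn (fun t => ∫ s in a..t, k (t - s) * g s) (Icc a b) := by
  -- Extending `g - g a` by constants makes it vanish on `(-∞, a]`, so that its Volterra integral
  -- is a convolution of a bounded continuous function with an integrable one.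
  set h : ℝ → ℝ := fun s => g (projIcc a b hab s) - g a
  have hh : Continuous h :=
    (hg.comp_continuous (continuous_subtype_val.comp continuous_projIcc) fun s =>
      (projIcc a b hab s).2).sub continuous_const
  have hh_bdd : BddAbove (range fun s => ‖h s‖) := by
    obtain ⟨C, hC⟩ := isCompact_Icc.exists_bound_of_continuousOn hg
    exact ⟨C + ‖g a‖, forall_mem_range.2 fun s =>
      (norm_sub_le _ _).trans (by gcongr; exact hC _ (projIcc a b hab s).2)⟩
  have hconv : Continuous (h ⋆[ContinuousLinearMap.mul ℝ ℝ] (Ioc 0 (b - a)).indicator k) :=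
    hh_bdd.continuous_convolution_left_of_integrable _ hh
      (hk.1.integrable_indicator measurableSet_Ioc)
  have hprim : ContinuousOn (fun t => ∫ u in (0 : ℝ)..t - a, k u) (Icc a b) := by
    refine (continuousOn_primitive_interval' hk left_mem_uIcc).comp
      (continuousOn_id.sub continuousOn_const) fun t ht => ?_
    rw [uIcc_of_le (sub_nonneg.2 hab)]
    exact ⟨sub_nonneg.2 ht.1, sub_le_sub_right ht.2 a⟩
  refine (hconv.continuousOn.add ((continuousOn_const (c := g a)).mul hprim)).congr
    fun t ht => ?_
  have hkt := intervalIntegrable_kernel_sub hk ht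
  have hsplit : ∫ s in a..t, k (t - s) * g s =
      (∫ s in a..t, k (t - s) * (g s - g a)) + g a * ∫ s in a..t, k (t - s) := by
    rw [← intervalIntegral.integral_const_mul, ← intervalIntegral.integral_add]
    · exact integral_congr fun s _ => by ring
    · exact hkt.mul_continuousOn
        ((hg.mono (uIcc_subset_Icc (left_mem_Icc.2 hab) ht)).sub continuousOn_const)
    · exact hkt.const_mul _
  have hconv_eq : (h ⋆[ContinuousLinearMap.mul ℝ ℝ] (Ioc 0 (b - a)).indicator k) t =
      ∫ s in a..t, k (t - s) * (g s - g a) := by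
    rw [convolution_def]
    refine integral_mul_indicator_kernel_sub_left (fun s hs => ?_) ht fun s hs => ?_
    · simp [h, projIcc_of_le_left hab hs.le]
    · simp [h, projIcc_of_mem hab (⟨hs.1, hs.2.le.trans ht.2⟩ : s ∈ Icc a b)]
  simp only [Pi.add_apply, Pi.mul_apply, hsplit, hconv_eq, integral_comp_sub_left, sub_self]

end VolterraKernel

lemma derivWithin_Icc_ae_eq_deriv (f : ℝ → ℝ) (a b : ℝ) :
    ∀ᵐ x, x ∈ Icc a b → derivWithin f (Icc a b) x = deriv f x := by
  filter_upwards [(Ioo_ae_eq_Icc (μ := volume) (a := a) (b := b)).mem_iff] with x hx hmem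
  exact derivWithin_of_mem_nhds (Icc_mem_nhds (hx.2 hmem).1 (hx.2 hmem).2)

lemma DifferentiableOn.hasDerivAt_derivWithin_Icc {f : ℝ → ℝ} {a b x : ℝ}
    (hf : DifferentiableOn ℝ f (Icc a b)) (hx : x ∈ Ioo a b) :
    HasDerivAt f (derivWithin f (Icc a b) x) x := by
  have hnhds : Icc a b ∈ nhds x := Icc_mem_nhds hx.1 hx.2
  rw [derivWithin_of_mem_nhds hnhds]
  exact ((hf x (Ioo_subset_Icc_self hx)).differentiableAt hnhds).hasDerivAt

theorem fractional_integration_by_parts_general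
    (α a b : ℝ) (hα1 : α < 1) (hab : a < b)
    (f g G G' : ℝ → ℝ)
    (hf : ContDiffOn ℝ 1 f (Set.Icc a b))
    (hg : ContinuousOn g (Set.Icc a b))
    (hG : ∀ t ∈ Set.Icc a b,
      G t = (1 / Real.Gamma (1 - α)) * ∫ s in a..t, (t - s) ^ (-α) * g s)
    (hG' : ∀ t ∈ Set.Ioo a b, HasDerivAt G (G' t) t)
    (hG'int : IntervalIntegrable G' MeasureTheory.volume a b) :
    ∫ t in a..b, f t * G' t =
      f b * G b -
        ∫ t in a..b,
          g t * ((1 / Real.Gamma (1 - α)) * ∫ τ in t..b, (τ - t) ^ (-α) * deriv f τ) := by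
  set c := 1 / Real.Gamma (1 - α)
  set f' := derivWithin f (Icc a b)
  have hf' : ContinuousOn f' (Icc a b) :=
    hf.continuousOn_derivWithin (uniqueDiffOn_Icc hab) le_rfl
  have hfd : ∀ x ∈ Ioo a b, HasDerivAt f (f' x) x := fun _ =>
    (hf.differentiableOn one_ne_zero).hasDerivAt_derivWithin_Icc
  have hk : IntervalIntegrable (fun u : ℝ => u ^ (-α)) volume 0 (b - a) :=
    intervalIntegral.intervalIntegrable_rpow' (by linarith)
  have hGc : ContinuousOn G (Icc a b) :=
    (continuousOn_const.mul (continuousOn_integral_volterra hab.le hk hg)).congr hG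
  have hGa : G a = 0 := by simp [hG a (left_mem_Icc.2 hab.le)]
  have huIcc : uIcc a b = Icc a b := uIcc_of_le hab.le
  have hIoo : Ioo (min a b) (max a b) = Ioo a b := by
    rw [min_eq_left hab.le, max_eq_right hab.le]
  rw [integral_mul_deriv_eq_deriv_mul_of_hasDerivAt (huIcc ▸ hf.continuousOn) (huIcc ▸ hGc)
    (hIoo ▸ hfd) (hIoo ▸ hG') (huIcc ▸ hf').intervalIntegrable hG'int, hGa, mul_zero, sub_zero]
  congr 1
  obtain ⟨C, hC⟩ := isCompact_Icc.exists_bound_of_continuousOn hf'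
  calc ∫ t in a..b, f' t * G t
      = c * ∫ t in a..b, f' t * ∫ s in a..t, (t - s) ^ (-α) * g s := by
        rw [← intervalIntegral.integral_const_mul]
        exact integral_congr fun t ht => by rw [hG t (huIcc ▸ ht), mul_left_comm]
    _ = c * ∫ t in a..b, g t * ∫ τ in t..b, (τ - t) ^ (-α) * f' τ := by
        rw [integral_mul_volterra_swap hab.le hk (hf'.aestronglyMeasurable measurableSet_Icc) hC
          hg.integrableOn_Icc]
    _ = ∫ t in a..b, g t * (c * ∫ τ in t..b, (τ - t) ^ (-α) * deriv f τ) := by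
        rw [← intervalIntegral.integral_const_mul]
        refine integral_congr fun t ht => ?_
        rw [mul_left_comm, intervalIntegral.integral_congr_ae ?_]
        filter_upwards [derivWithin_Icc_ae_eq_deriv f a b] with τ hτ hmem
        exact congrArg _
          (hτ (uIcc_subset_Icc (huIcc ▸ ht) (right_mem_Icc.2 hab.le) (uIoc_subset_uIcc hmem)))

/-- Fractional integration by parts (Lemma 4): for `0 < α < 1`, `a < b`,
`f` continuously differentiable on `[a,b]`, `g` continuous on `[a,b]`, and
`G = ₐI_t^{1-α} g` the Riemann–Liouville fractional integral (so `G a = 0`),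
assumed differentiable on `(a,b)` with integrable derivative `G'`
(the Riemann–Liouville derivative `ₐD_t^α g`), one has
`∫ₐᵇ f · G' = f(b)·G(b) − ∫ₐᵇ g(t) · (1/Γ(1−α)) ∫ₜᵇ (τ−t)^{−α} f'(τ) dτ dt`. -/
theorem fractional_integration_by_parts
    (α a b : ℝ) (hα : 0 < α) (hα1 : α < 1) (hab : a < b)
    (f g G G' : ℝ → ℝ)
    (hf : ContDiffOn ℝ 1 f (Set.Icc a b))
    (hg : ContinuousOn g (Set.Icc a b))
    (hG : ∀ t ∈ Set.Icc a b,
      G t = (1 / Real.Gamma (1 - α)) * ∫ s in a..t, (t - s) ^ (-α) * g s)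
    (hG' : ∀ t ∈ Set.Ioo a b, HasDerivAt G (G' t) t)
    (hG'int : IntervalIntegrable G' MeasureTheory.volume a b) :
    ∫ t in a..b, f t * G' t =
      f b * G b -
        ∫ t in a..b,
          g t * ((1 / Real.Gamma (1 - α)) * ∫ τ in t..b, (τ - t) ^ (-α) * deriv f τ) :=
  fractional_integration_by_parts_general α a b hα1 hab f g G G' hf hg hG hG' hG'int
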